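/- Let 1 ≤ p < ∞, k ≥ 1, and let μ ∈ M^p be a measure whose support contains at least k points. Then the set C_k of optimal codebooks is a nonempty compact subset of Ω̄^k. Moreover, every optimal codebook c* ∈ C_k satisfies: all its centroids c_j* lie in Ω, μ(V_j(c*)) > 0 for every 1 ≤ j ≤ k, and c_j* ≠ c_{j'}* for all 1 ≤ j ≠ j' ≤ k. -/

import Mathlib

open MeasureTheory ENNReal Set

noncomputable section

abbrev E2 := EuclideanSpace ℝ (Fin 2)

/-- The open half-plane `Ω` above the diagonal. -/
def Omega : Set E2 := {x | x 0 < x 1}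

/-- The diagonal `∂Ω`. -/
def diagSet : Set E2 := {x | x 0 = x 1}

/-- `Ω̄ = Ω ∪ ∂Ω`. -/
def OmegaBar : Set E2 := Omega ∪ diagSet

/-- Euclidean distance of a point to the diagonal. -/
def dDiag (x : E2) : ℝ := Metric.infDist x diagSet

/-- Total persistence `Pers_p(μ) = ∫_Ω ‖x-∂Ω‖^p dμ(x)`. -/
def Pers (p : ℝ) (μ : Measure E2) : ℝ≥0∞ :=
  ∫⁻ x in Omega, ENNReal.ofReal (dDiag x ^ p) ∂μ

/-- Admissible partial transport plans: measures on `Ω̄ × Ω̄` whose first (resp. second)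
marginal coincides with `μ` (resp. `ν`) on `Ω`. -/
def Adm (μ ν : Measure E2) : Set (Measure (E2 × E2)) :=
  {π | (π.map Prod.fst).restrict Omega = μ.restrict Omega ∧
       (π.map Prod.snd).restrict Omega = ν.restrict Omega ∧
       π ((OmegaBar ×ˢ OmegaBar)ᶜ) = 0}

/-- `OT_p(μ,ν)^p`, the optimal partial transport cost. -/
def OTpow (p : ℝ) (μ ν : Measure E2) : ℝ≥0∞ :=
  ⨅ π ∈ Adm μ ν, ∫⁻ z, ENNReal.ofReal (dist z.1 z.2 ^ p) ∂π

/-- The distance `OT_p(μ,ν)`. -/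
def OTp (p : ℝ) (μ ν : Measure E2) : ℝ≥0∞ := (OTpow p μ ν) ^ (1/p)

/-- The closed ℓ¹-ball `A_L` of radius `L/√2` centered at `(-L/√8, L/√8)`. -/
def ballA (L : ℝ) : Set E2 :=
  {x | |x 0 + L / Real.sqrt 8| + |x 1 - L / Real.sqrt 8| ≤ L / Real.sqrt 2}

/-- Membership in `M^q_{L,M}`: supported in `Ω`, in `A_L`, with `Pers_q ≤ M`. -/
def MemMq (q L M : ℝ) (μ : Measure E2) : Prop :=
  μ Omegaᶜ = 0 ∧ μ (ballA L)ᶜ = 0 ∧ Pers q μ ≤ ENNReal.ofReal M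

/-- Empirical EPD `μ̄_n = (1/n)(μ₁ + ⋯ + μ_n)` of a sample of `n` persistence measures. -/
def empEPD (n : ℕ) (ω : Fin n → Measure E2) : Measure E2 :=
  (n : ℝ≥0∞)⁻¹ • ∑ i : Fin n, ω i

/-- Distance from `x` to the `j`-th centroid, the last index standing for the diagonal. -/
def cdistC (k : ℕ) (c : Fin k → E2) (j : Fin (k+1)) (x : E2) : ℝ :=
  if h : (j : ℕ) < k then dist x (c ⟨j, h⟩) else dDiag x

/-- Voronoi cells `V_j(c)` (the last cell being the diagonal cell `V_{k+1}`). -/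
def Vcell (k : ℕ) (c : Fin k → E2) (j : Fin (k+1)) : Set E2 :=
  {x ∈ Omega | (∀ j' : Fin (k+1), j' < j → cdistC k c j x ≤ cdistC k c j' x) ∧
               (∀ j' : Fin (k+1), j < j' → cdistC k c j x < cdistC k c j' x)}

/-- The distortion `R_{k,p}(c)`. -/
def distortion (p : ℝ) (μ : Measure E2) (k : ℕ) (c : Fin k → E2) : ℝ≥0∞ :=
  (∑ j : Fin (k+1), ∫⁻ x in Vcell k c j, ENNReal.ofReal (cdistC k c j x ^ p) ∂μ) ^ (1/p)

/-- The optimal distortion `R_k^* = inf {R_{k,p}(c) : c ∈ Ω̄^k}`. -/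
def Rstar (p : ℝ) (μ : Measure E2) (k : ℕ) : ℝ≥0∞ :=
  ⨅ (c : Fin k → E2) (_ : ∀ j, c j ∈ OmegaBar), distortion p μ k c

/-- The set `C_k` of optimal codebooks. -/
def Copt (p : ℝ) (μ : Measure E2) (k : ℕ) : Set (Fin k → E2) :=
  {c | (∀ j, c j ∈ OmegaBar) ∧ distortion p μ k c = Rstar p μ k}

/-- Support of a measure. -/
def msupport (μ : Measure E2) : Set E2 :=
  {x | ∀ U : Set E2, IsOpen U → x ∈ U → 0 < μ U}

/-- Euclidean distance between codebooks seen as vectors of `ℝ^{2k}`. -/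
def cbDist (k : ℕ) (c c' : Fin k → E2) : ℝ :=
  Real.sqrt (∑ j : Fin k, dist (c j) (c' j) ^ 2)

/-- Euclidean norm on `(ℝ²)^k`. -/
def pnorm2 (k : ℕ) (v : Fin k → E2) : ℝ := Real.sqrt (∑ j : Fin k, ‖v j‖ ^ 2)

/-- Distance between the `j`-th and `j'`-th centroids, the last index standing
for the diagonal. -/
def cdistPt (k : ℕ) (c : Fin k → E2) (j j' : Fin (k+1)) : ℝ :=
  if h : (j : ℕ) < k then
    (if h' : (j' : ℕ) < k then dist (c ⟨j, h⟩) (c ⟨j', h'⟩) else dDiag (c ⟨j, h⟩))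
  else (if h' : (j' : ℕ) < k then dDiag (c ⟨j', h'⟩) else 0)

/-- The set `N(c)` of points lying on a boundary between two Voronoi cells. -/
def Nset (k : ℕ) (c : Fin k → E2) : Set E2 :=
  {x ∈ Omega | ∃ j j' : Fin (k+1), j < j' ∧ x ∈ Vcell k c j ∧ cdistC k c j x = cdistC k c j' x}

/-- The `t`-neighborhood `A^t` of `A` in `Ω`. -/
def tN (A : Set E2) (t : ℝ) : Set E2 := {x ∈ Omega | ∃ a ∈ A, dist x a ≤ t}

/-- `w₂(c, m)_j = ∫_{V_j(c)} x dm(x)`. -/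
def w2 (k : ℕ) (c : Fin k → E2) (m : Measure E2) (j : Fin k) : E2 :=
  ∫ x in Vcell k c j.castSucc, x ∂m

/-- Absolute difference in `ℝ≥0∞`. -/
def eabs (a b : ℝ≥0∞) : ℝ≥0∞ := (a - b) + (b - a)

/-
Let `Z(c)` (`codeSet c`) be the diagonal together with the centroids of `c`. On the Voronoi
cell `V_j(c)` the distance to the `j`-th centroid is the distance to `Z(c)`, so
`R_{k,p}(c)^p = ∫_Ω d(x, Z(c))^p dμ`, which is continuous in `c` by dominated convergence (the
integrand is bounded by `d(x, ∂Ω)^p`).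

If a support point of `μ` lies outside a finite set `T`, then some support point `z` lies in
`Ω \ T`, and adding `z` as a centroid strictly lowers the integrand near `z`. Hence for `m < k`
the optimal cost with `m + 1` centroids is strictly below the one with `m` centroids. Deleting a
centroid `c_j` raises the cost by at most the persistence mass of `{‖x‖ > ‖c_j‖ / 2}`, which is
small when `‖c_j‖` is large, so the strict gap confines near-optimal codebooks to a bounded set.
This gives existence (by induction on the number of centroids) and compactness of `C_k`.

Finally, if an optimal codebook had a centroid on the diagonal, two equal centroids, or a null
cell, then deleting that centroid would not increase the cost, contradicting the gap.
-/

open Metric Filter Topology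

lemma continuous_coord (i : Fin 2) : Continuous fun x : E2 => x i := by fun_prop

lemma isOpen_Omega : IsOpen Omega := isOpen_lt (continuous_coord 0) (continuous_coord 1)

lemma isClosed_diagSet : IsClosed diagSet := isClosed_eq (continuous_coord 0) (continuous_coord 1)

lemma zero_mem_diagSet : (0 : E2) ∈ diagSet := by simp [diagSet]

lemma isClosed_OmegaBar : IsClosed OmegaBar := by
  have : OmegaBar = {x : E2 | x 0 ≤ x 1} := by
    ext x; simp [OmegaBar, Omega, diagSet, le_iff_lt_or_eq]
  exact this ▸ isClosed_le (continuous_coord 0) (continuous_coord 1)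

lemma isClosed_setOf_forall_mem_OmegaBar (m : ℕ) :
    IsClosed {c : Fin m → E2 | ∀ j, c j ∈ OmegaBar} := by
  rw [ofPred_forall]
  exact isClosed_iInter fun j => isClosed_OmegaBar.preimage (continuous_apply j)

lemma dDiag_le_norm (x : E2) : dDiag x ≤ ‖x‖ := by
  simpa [dDiag] using infDist_le_dist_of_mem (x := x) zero_mem_diagSet

lemma infDist_le_dDiag {A : Set E2} (hA : diagSet ⊆ A) (x : E2) : infDist x A ≤ dDiag x :=
  infDist_le_infDist_of_subset hA ⟨0, zero_mem_diagSet⟩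

lemma mem_msupport_of_mem_support {μ : Measure E2} {x : E2} (hx : x ∈ μ.support) :
    x ∈ msupport μ :=
  fun _ hU hxU => (Measure.mem_support_iff_forall x).1 hx _ (hU.mem_nhds hxU)

lemma exists_mem_Omega_msupport_notMem {μ : Measure E2} (hμΩ : μ Omegaᶜ = 0) {T : Set E2}
    (hT : IsClosed T) (h : ¬ msupport μ ⊆ T) : ∃ z ∈ Omega ∩ msupport μ, z ∉ T := by
  obtain ⟨s, hs, hsT⟩ := not_subset.1 h
  have hpos : 0 < μ (Tᶜ ∩ Omega) := by
    rw [measure_inter_conull hμΩ]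
    exact hs _ hT.isOpen_compl hsT
  obtain ⟨z, ⟨hzT, hzΩ⟩, hz⟩ := Measure.nonempty_inter_support_of_pos hpos
  exact ⟨z, ⟨hzΩ, mem_msupport_of_mem_support hz⟩, hzT⟩

lemma not_msupport_subset_range {μ : Measure E2} {k m : ℕ}
    (hsupp : ∃ s : Finset E2, s.card = k ∧ ↑s ⊆ msupport μ) (hm : m < k) (c : Fin m → E2) :
    ¬ msupport μ ⊆ range c := by
  intro h
  obtain ⟨s, rfl, hs⟩ := hsupp
  have hsub : s ⊆ Finset.univ.image c := fun x hx => by simpa using h (hs hx)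
  have := (Finset.card_le_card hsub).trans Finset.card_image_le
  simp only [Finset.card_univ, Fintype.card_fin] at this
  omega

def codeSet {m : ℕ} (c : Fin m → E2) : Set E2 := diagSet ∪ range c

section codeSet

variable {m : ℕ} (c : Fin m → E2)

lemma diagSet_subset_codeSet : diagSet ⊆ codeSet c := subset_union_left

lemma codeSet_nonempty : (codeSet c).Nonempty := ⟨0, Or.inl zero_mem_diagSet⟩

lemma isClosed_codeSet : IsClosed (codeSet c) :=
  isClosed_diagSet.union (finite_range c).isClosed

lemma codeSet_cons (z : E2) :
    codeSet (Fin.cons z c : Fin (m + 1) → E2) = insert z (codeSet c) := by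
  simp [codeSet, insert_union_distrib]

end codeSet

lemma codeSet_eq_insert_succAbove {m : ℕ} (c : Fin (m + 1) → E2) (j : Fin (m + 1)) :
    codeSet c = insert (c j) (codeSet (c ∘ j.succAbove)) := by
  rw [codeSet, codeSet, range_comp, Fin.range_succAbove, ← union_insert, ← image_insert_eq,
    insert_eq, union_compl_self, image_univ]

lemma infDist_codeSet_le_add_dist {m : ℕ} (x : E2) (c c' : Fin m → E2) :
    infDist x (codeSet c) ≤ infDist x (codeSet c') + dist c c' := by
  rw [← sub_le_iff_le_add, le_infDist (codeSet_nonempty c')]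
  rintro y (hy | ⟨j, rfl⟩)
  · linarith [infDist_le_dist_of_mem (x := x) (show y ∈ codeSet c from Or.inl hy),
      dist_nonneg (x := c) (y := c')]
  · linarith [infDist_le_dist_of_mem (x := x) (show c j ∈ codeSet c from Or.inr ⟨j, rfl⟩),
      dist_triangle x (c' j) (c j), dist_le_pi_dist c c' j, dist_comm (c j) (c' j)]

lemma cdistC_castSucc {m : ℕ} (c : Fin m → E2) (i : Fin m) (x : E2) :
    cdistC m c i.castSucc x = dist x (c i) := by
  simp [cdistC]

lemma cdistC_last {m : ℕ} (c : Fin m → E2) (x : E2) : cdistC m c (Fin.last m) x = dDiag x := by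
  simp [cdistC]

section Voronoi

variable (k : ℕ) (c : Fin k → E2)

lemma continuous_cdistC (j : Fin (k + 1)) : Continuous (cdistC k c j) := by
  unfold cdistC
  split_ifs
  exacts [continuous_id.dist continuous_const, continuous_infDist_pt _]

lemma infDist_codeSet_le_cdistC (j : Fin (k + 1)) (x : E2) :
    infDist x (codeSet c) ≤ cdistC k c j x := by
  unfold cdistC
  split_ifs
  · exact infDist_le_dist_of_mem (Or.inr ⟨_, rfl⟩)
  · exact infDist_le_infDist_of_subset (diagSet_subset_codeSet c) ⟨0, zero_mem_diagSet⟩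

lemma exists_cdistC_eq_infDist (x : E2) : ∃ j, cdistC k c j x = infDist x (codeSet c) := by
  obtain ⟨y, hy, hxy⟩ := exists_mem_closure_infDist_eq_dist (codeSet_nonempty c) x
  rw [(isClosed_codeSet c).closure_eq] at hy
  rcases hy with hy | ⟨i, rfl⟩
  · refine ⟨Fin.last k, le_antisymm ?_ (infDist_codeSet_le_cdistC k c _ x)⟩
    simpa [cdistC, dDiag, hxy] using infDist_le_dist_of_mem hy
  · exact ⟨i.castSucc, by simp [cdistC, hxy]⟩

variable {k c}

lemma cdistC_le_of_mem_Vcell {x : E2} {j : Fin (k + 1)} (hx : x ∈ Vcell k c j)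
    (j' : Fin (k + 1)) : cdistC k c j x ≤ cdistC k c j' x := by
  rcases lt_trichotomy j' j with h | rfl | h
  exacts [hx.2.1 j' h, le_rfl, (hx.2.2 j' h).le]

lemma cdistC_eq_infDist_of_mem_Vcell {x : E2} {j : Fin (k + 1)} (hx : x ∈ Vcell k c j) :
    cdistC k c j x = infDist x (codeSet c) := by
  obtain ⟨j', hj'⟩ := exists_cdistC_eq_infDist k c x
  exact le_antisymm (hj' ▸ cdistC_le_of_mem_Vcell hx j') (infDist_codeSet_le_cdistC k c j x)

lemma exists_mem_Vcell {x : E2} (hx : x ∈ Omega) : ∃ j, x ∈ Vcell k c j := by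
  set M := Finset.univ.filter fun j => cdistC k c j x = infDist x (codeSet c)
  obtain ⟨j, hjM, hmax⟩ := M.exists_max_image id <| by
    obtain ⟨j, hj⟩ := exists_cdistC_eq_infDist k c x
    exact ⟨j, by simpa [M] using hj⟩
  have hj : cdistC k c j x = infDist x (codeSet c) := by simpa [M] using hjM
  refine ⟨j, hx, fun j' _ => hj ▸ infDist_codeSet_le_cdistC k c j' x, fun j' hjj' => ?_⟩
  refine lt_of_le_of_ne (hj ▸ infDist_codeSet_le_cdistC k c j' x) fun heq => ?_
  exact (hmax j' (by simpa [M, ← heq] using hj)).not_gt hjj'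

lemma pairwise_disjoint_Vcell : Pairwise (Function.onFun Disjoint (Vcell k c)) := by
  intro i j hij
  refine disjoint_left.2 fun x hxi hxj => ?_
  rcases hij.lt_or_gt with h | h
  exacts [(hxi.2.2 j h).not_ge (hxj.2.1 i h), (hxj.2.2 i h).not_ge (hxi.2.1 j h)]

lemma iUnion_Vcell : ⋃ j, Vcell k c j = Omega :=
  Subset.antisymm (iUnion_subset fun _ _ hx => hx.1)
    fun _ hx => mem_iUnion.2 (exists_mem_Vcell hx)

lemma measurableSet_Vcell (j : Fin (k + 1)) : MeasurableSet (Vcell k c j) := by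
  have hc := fun j => (continuous_cdistC k c j).measurable
  refine isOpen_Omega.measurableSet.inter (measurableSet_setOfPred.2 ?_)
  fun_prop

end Voronoi

lemma infDist_codeSet_succAbove_le {m : ℕ} {c : Fin (m + 1) → E2} {j : Fin (m + 1)} {x : E2}
    (hx : x ∈ Omega) (hxj : x ∉ Vcell (m + 1) c j.castSucc) :
    infDist x (codeSet (c ∘ j.succAbove)) ≤ infDist x (codeSet c) := by
  obtain ⟨i, hi⟩ := exists_mem_Vcell (c := c) hx
  rw [← cdistC_eq_infDist_of_mem_Vcell hi]
  induction i using Fin.lastCases with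
  | last => exact cdistC_last c x ▸ infDist_le_dDiag (diagSet_subset_codeSet _) x
  | cast i =>
    obtain ⟨i', rfl⟩ := Fin.exists_succAbove_eq (x := i) (y := j) fun h => hxj (h ▸ hi)
    exact cdistC_castSucc c _ x ▸ infDist_le_dist_of_mem (Or.inr ⟨i', rfl⟩)

section Cost

variable (p : ℝ) (μ : Measure E2)

def quantCost (A : Set E2) : ℝ≥0∞ := ∫⁻ x in Omega, ENNReal.ofReal (infDist x A ^ p) ∂μ

def optCost (m : ℕ) : ℝ≥0∞ :=
  ⨅ (c : Fin m → E2) (_ : ∀ j, c j ∈ OmegaBar), quantCost p μ (codeSet c)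

lemma distortion_eq_quantCost {k : ℕ} (c : Fin k → E2) :
    distortion p μ k c = quantCost p μ (codeSet c) ^ (1 / p) := by
  rw [distortion, quantCost, ← iUnion_Vcell (c := c),
    lintegral_iUnion measurableSet_Vcell pairwise_disjoint_Vcell, tsum_fintype]
  congr 1
  refine Finset.sum_congr rfl fun j _ => setLIntegral_congr_fun (measurableSet_Vcell j) ?_
  intro x hx
  simp only [cdistC_eq_infDist_of_mem_Vcell hx]

variable {p}

lemma Rstar_eq_optCost (hp : 0 < p) (k : ℕ) : Rstar p μ k = optCost p μ k ^ (1 / p) := by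
  simp only [Rstar, optCost, distortion_eq_quantCost,
    ← ENNReal.orderIsoRpow_apply _ (one_div_pos.2 hp), OrderIso.map_iInf]

lemma mem_Copt_iff (hp : 0 < p) {k : ℕ} {c : Fin k → E2} :
    c ∈ Copt p μ k ↔ (∀ j, c j ∈ OmegaBar) ∧ quantCost p μ (codeSet c) = optCost p μ k := by
  rw [Copt, mem_ofPred_eq, distortion_eq_quantCost, Rstar_eq_optCost μ hp,
    (ENNReal.rpow_left_injective (one_div_pos.2 hp).ne').eq_iff]

lemma measurable_ofReal_infDist_rpow (A : Set E2) :
    Measurable fun x => ENNReal.ofReal (infDist x A ^ p) := by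
  have := (continuous_infDist_pt A).measurable
  fun_prop

lemma quantCost_anti (hp : 0 ≤ p) {A B : Set E2} (hAB : A ⊆ B) (hA : A.Nonempty) :
    quantCost p μ B ≤ quantCost p μ A :=
  lintegral_mono fun _ => ENNReal.ofReal_le_ofReal <|
    Real.rpow_le_rpow infDist_nonneg (infDist_le_infDist_of_subset hAB hA) hp

lemma quantCost_le_Pers (hp : 0 ≤ p) {A : Set E2} (hA : diagSet ⊆ A) :
    quantCost p μ A ≤ Pers p μ :=
  lintegral_mono fun x => ENNReal.ofReal_le_ofReal <|
    Real.rpow_le_rpow infDist_nonneg (infDist_le_dDiag hA x) hp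

lemma quantCost_insert_lt (hp : 0 < p) {A : Set E2} (hfin : quantCost p μ A ≠ ⊤)
    (hA : IsClosed A) (hne : A.Nonempty) {z : E2} (hzA : z ∉ A) (hz : z ∈ Omega ∩ msupport μ) :
    quantCost p μ (insert z A) < quantCost p μ A := by
  have hr : 0 < infDist z A / 2 := half_pos ((hA.notMem_iff_infDist_pos hne).1 hzA)
  have hball : μ.restrict Omega (ball z (infDist z A / 2)) ≠ 0 := by
    rw [Measure.restrict_apply measurableSet_ball]
    exact (hz.2 _ (isOpen_ball.inter isOpen_Omega) ⟨mem_ball_self hr, hz.1⟩).ne'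
  refine lintegral_strict_mono_of_ae_le_of_ae_lt_on
    (measurable_ofReal_infDist_rpow A).aemeasurable
    (ne_top_of_le_ne_top hfin (quantCost_anti μ hp.le (subset_insert z A) hne))
    (ae_of_all _ fun x => ENNReal.ofReal_le_ofReal <| Real.rpow_le_rpow infDist_nonneg
      (infDist_le_infDist_of_subset (subset_insert z A) hne) hp.le) hball
    (ae_of_all _ fun x hx => ?_)
  have hxz : dist x z < infDist z A / 2 := hx
  have hnear : infDist x (insert z A) < infDist z A / 2 :=
    (infDist_le_dist_of_mem (mem_insert z A)).trans_lt hxz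
  have hfar : infDist z A / 2 < infDist x A := by
    have := infDist_le_infDist_add_dist (x := z) (y := x) (s := A)
    rw [dist_comm] at this
    linarith
  exact (ENNReal.ofReal_lt_ofReal_iff (Real.rpow_pos_of_pos (hr.trans hfar) p)).2 <|
    Real.rpow_lt_rpow infDist_nonneg (hnear.trans hfar) hp

end Cost

section Tail

variable (p : ℝ) (μ : Measure E2)

def persMeasure : Measure E2 :=
  (μ.restrict Omega).withDensity fun x => ENNReal.ofReal (dDiag x ^ p)

variable {p μ}

lemma persMeasure_apply {S : Set E2} (hS : MeasurableSet S) :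
    persMeasure p μ S =
      ∫⁻ x in Omega, S.indicator (fun x => ENNReal.ofReal (dDiag x ^ p)) x ∂μ := by
  rw [persMeasure, withDensity_apply _ hS, lintegral_indicator hS]

lemma exists_persMeasure_norm_gt_lt (hμp : Pers p μ ≠ ⊤) {ε : ℝ≥0∞} (hε : 0 < ε) :
    ∃ R, persMeasure p μ {x | R < ‖x‖} < ε := by
  have : IsFiniteMeasure (persMeasure p μ) := isFiniteMeasure_withDensity hμp
  have h := tendsto_measure_norm_gt_of_isTightMeasureSet
    (isTightMeasureSet_singleton (μ := persMeasure p μ))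
  simp only [mem_singleton_iff, iSup_iSup_eq_left] at h
  exact (h.eventually (gt_mem_nhds hε)).exists

lemma quantCost_le_insert_add (hp : 0 ≤ p) {A : Set E2} (hA : diagSet ⊆ A) (s : E2) :
    quantCost p μ A ≤ quantCost p μ (insert s A) + persMeasure p μ {x | ‖s‖ / 2 < ‖x‖} := by
  have hS : MeasurableSet {x : E2 | ‖s‖ / 2 < ‖x‖} :=
    measurableSet_lt (by fun_prop) (by fun_prop)
  rw [persMeasure_apply hS, quantCost, quantCost,
    ← lintegral_add_left (measurable_ofReal_infDist_rpow _)]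
  refine lintegral_mono fun x => ?_
  by_cases hx : ‖s‖ / 2 < ‖x‖
  · rw [indicator_of_mem (show x ∈ {x : E2 | ‖s‖ / 2 < ‖x‖} from hx)]
    exact le_add_left <| ENNReal.ofReal_le_ofReal <|
      Real.rpow_le_rpow infDist_nonneg (infDist_le_dDiag hA x) hp
  · refine le_add_right <| ENNReal.ofReal_le_ofReal <| Real.rpow_le_rpow infDist_nonneg ?_ hp
    have hne : A.Nonempty := ⟨0, hA zero_mem_diagSet⟩
    refine (le_infDist (hne.mono (subset_insert s A))).2 fun y hy => ?_
    rcases hy with rfl | hy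
    · have := norm_sub_norm_le y x
      rw [← dist_eq_norm, dist_comm] at this
      linarith [infDist_le_dDiag hA x, dDiag_le_norm x]
    · exact infDist_le_dist_of_mem hy

end Tail

lemma continuous_quantCost_codeSet {p : ℝ} {μ : Measure E2} (hp : 0 ≤ p) (hμp : Pers p μ ≠ ⊤)
    (m : ℕ) : Continuous fun c : Fin m → E2 => quantCost p μ (codeSet c) := by
  refine continuous_iff_continuousAt.2 fun c => ?_
  refine tendsto_lintegral_filter_of_dominated_convergence _
    (Eventually.of_forall fun _ => measurable_ofReal_infDist_rpow _)
    (Eventually.of_forall fun c' => ae_of_all _ fun x => ENNReal.ofReal_le_ofReal <|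
      Real.rpow_le_rpow infDist_nonneg (infDist_le_dDiag (diagSet_subset_codeSet c') x) hp) hμp
    (ae_of_all _ fun x => ?_)
  have : Continuous fun c : Fin m → E2 => infDist x (codeSet c) :=
    (LipschitzWith.of_le_add (infDist_codeSet_le_add_dist x)).continuous
  exact (ENNReal.continuous_ofReal.comp ((Real.continuous_rpow_const hp).comp this)).continuousAt

section Optimal

variable {p : ℝ} {μ : Measure E2}

lemma optCost_le {m : ℕ} {c : Fin m → E2} (hc : ∀ j, c j ∈ OmegaBar) :
    optCost p μ m ≤ quantCost p μ (codeSet c) :=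
  iInf₂_le c hc

lemma optCost_succ_lt (hp : 0 < p) (hμΩ : μ Omegaᶜ = 0) (hμp : Pers p μ ≠ ⊤) {m : ℕ}
    {c : Fin m → E2} (hc : ∀ j, c j ∈ OmegaBar) (hsupp : ¬ msupport μ ⊆ range c) :
    optCost p μ (m + 1) < quantCost p μ (codeSet c) := by
  obtain ⟨z, hz, hzc⟩ := exists_mem_Omega_msupport_notMem hμΩ (finite_range c).isClosed hsupp
  have hz_codeSet : z ∉ codeSet c := by
    rintro (hzd | hzr)
    exacts [hz.1.ne hzd, hzc hzr]
  have hfin := ne_top_of_le_ne_top hμp (quantCost_le_Pers μ hp.le (diagSet_subset_codeSet c))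
  calc optCost p μ (m + 1) ≤ quantCost p μ (codeSet (Fin.cons z c : Fin (m + 1) → E2)) :=
        optCost_le (Fin.cases (Or.inl hz.1) hc)
    _ = quantCost p μ (insert z (codeSet c)) := by rw [codeSet_cons]
    _ < quantCost p μ (codeSet c) :=
        quantCost_insert_lt μ hp hfin (isClosed_codeSet c) (codeSet_nonempty c) hz_codeSet hz

lemma optCost_succ_lt_optCost (hp : 0 < p) (hμΩ : μ Omegaᶜ = 0) (hμp : Pers p μ ≠ ⊤) {k m : ℕ}
    (hsupp : ∃ s : Finset E2, s.card = k ∧ ↑s ⊆ msupport μ) (hm : m < k) {c : Fin m → E2}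
    (hc : c ∈ Copt p μ m) : optCost p μ (m + 1) < optCost p μ m :=
  ((mem_Copt_iff μ hp).1 hc).2 ▸
    optCost_succ_lt hp hμΩ hμp hc.1 (not_msupport_subset_range hsupp hm c)

lemma exists_norm_le_of_quantCost_lt (hp : 0 ≤ p) (hμp : Pers p μ ≠ ⊤) {m : ℕ} {a : ℝ≥0∞}
    (ha : a < optCost p μ m) : ∃ R, ∀ c : Fin (m + 1) → E2, (∀ j, c j ∈ OmegaBar) →
      quantCost p μ (codeSet c) < a → ∀ j, ‖c j‖ ≤ R := by
  obtain ⟨R, hR⟩ := exists_persMeasure_norm_gt_lt hμp (tsub_pos_of_lt ha)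
  refine ⟨2 * R, fun c hc hca j => le_of_not_gt fun hj => ?_⟩
  have hsub : {x : E2 | ‖c j‖ / 2 < ‖x‖} ⊆ {x | R < ‖x‖} := by
    intro x (hx : ‖c j‖ / 2 < ‖x‖)
    show R < ‖x‖
    linarith
  have htail : persMeasure p μ {x | ‖c j‖ / 2 < ‖x‖} < optCost p μ m - a :=
    (measure_mono hsub).trans_lt hR
  refine lt_irrefl (optCost p μ m) ?_
  calc optCost p μ m ≤ quantCost p μ (codeSet (c ∘ j.succAbove)) := optCost_le fun i => hc _
    _ ≤ quantCost p μ (codeSet c) + persMeasure p μ {x | ‖c j‖ / 2 < ‖x‖} := by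
        rw [codeSet_eq_insert_succAbove c j]
        exact quantCost_le_insert_add hp (diagSet_subset_codeSet _) _
    _ < a + (optCost p μ m - a) := ENNReal.add_lt_add hca htail
    _ = optCost p μ m := add_tsub_cancel_of_le ha.le

lemma Copt_succ_nonempty (hp : 0 < p) (hμp : Pers p μ ≠ ⊤) {m : ℕ}
    (hlt : optCost p μ (m + 1) < optCost p μ m) : (Copt p μ (m + 1)).Nonempty := by
  obtain ⟨a, hlta, hao⟩ := exists_between hlt
  obtain ⟨R, hR⟩ := exists_norm_le_of_quantCost_lt hp.le hμp hao
  obtain ⟨c₀, hc₀, hc₀a⟩ : ∃ c₀ : Fin (m + 1) → E2,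
      (∀ j, c₀ j ∈ OmegaBar) ∧ quantCost p μ (codeSet c₀) < a := by
    simpa [optCost, iInf_lt_iff] using hlta
  have hcoercive : ∀ᶠ c in cocompact _ ⊓ 𝓟 {c : Fin (m + 1) → E2 | ∀ j, c j ∈ OmegaBar},
      quantCost p μ (codeSet c₀) ≤ quantCost p μ (codeSet c) := by
    have hK := isCompact_univ_pi fun _ : Fin (m + 1) => isCompact_closedBall (0 : E2) R
    filter_upwards [inter_mem_inf hK.compl_mem_cocompact (mem_principal_self _)] with c ⟨hcK, hc⟩
    refine le_of_not_gt fun hlt' => hcK fun j _ => ?_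
    simpa using hR c hc (hlt'.trans hc₀a) j
  obtain ⟨c, hc, hmin⟩ := (continuous_quantCost_codeSet hp.le hμp (m + 1)).continuousOn
    |>.exists_isMinOn' (isClosed_setOf_forall_mem_OmegaBar _) hc₀ hcoercive
  refine ⟨c, (mem_Copt_iff μ hp).2 ⟨hc, le_antisymm ?_ (optCost_le hc)⟩⟩
  exact le_iInf₂ fun c' hc' => hmin hc'

lemma Copt_nonempty (hp : 0 < p) (hμΩ : μ Omegaᶜ = 0) (hμp : Pers p μ ≠ ⊤) {k : ℕ}
    (hsupp : ∃ s : Finset E2, s.card = k ∧ ↑s ⊆ msupport μ) :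
    ∀ m ≤ k, (Copt p μ m).Nonempty
  | 0, _ => ⟨finZeroElim, (mem_Copt_iff μ hp).2 ⟨finZeroElim, le_antisymm
      (le_iInf₂ fun c _ => by rw [Subsingleton.elim c finZeroElim]) (optCost_le finZeroElim)⟩⟩
  | m + 1, hm => by
    obtain ⟨c, hc⟩ := Copt_nonempty hp hμΩ hμp hsupp m (by omega)
    exact Copt_succ_nonempty hp hμp (optCost_succ_lt_optCost hp hμΩ hμp hsupp hm hc)

variable {m : ℕ}

lemma quantCost_lt_succAbove_of_mem_Copt (hp : 0 < p) (hμΩ : μ Omegaᶜ = 0) (hμp : Pers p μ ≠ ⊤)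
    (hsupp : ∃ s : Finset E2, s.card = m + 1 ∧ ↑s ⊆ msupport μ) {c : Fin (m + 1) → E2}
    (hc : c ∈ Copt p μ (m + 1)) (j : Fin (m + 1)) :
    quantCost p μ (codeSet c) < quantCost p μ (codeSet (c ∘ j.succAbove)) :=
  ((mem_Copt_iff μ hp).1 hc).2 ▸ optCost_succ_lt hp hμΩ hμp (fun _ => hc.1 _)
    (not_msupport_subset_range hsupp m.lt_succ_self _)

lemma mem_Omega_of_mem_Copt (hp : 0 < p) (hμΩ : μ Omegaᶜ = 0) (hμp : Pers p μ ≠ ⊤)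
    (hsupp : ∃ s : Finset E2, s.card = m + 1 ∧ ↑s ⊆ msupport μ) {c : Fin (m + 1) → E2}
    (hc : c ∈ Copt p μ (m + 1)) (j : Fin (m + 1)) : c j ∈ Omega := by
  refine (hc.1 j).resolve_right fun hj => ?_
  have := quantCost_lt_succAbove_of_mem_Copt hp hμΩ hμp hsupp hc j
  rw [codeSet_eq_insert_succAbove c j, insert_eq_of_mem (diagSet_subset_codeSet _ hj)] at this
  exact this.false

lemma injective_of_mem_Copt (hp : 0 < p) (hμΩ : μ Omegaᶜ = 0) (hμp : Pers p μ ≠ ⊤)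
    (hsupp : ∃ s : Finset E2, s.card = m + 1 ∧ ↑s ⊆ msupport μ) {c : Fin (m + 1) → E2}
    (hc : c ∈ Copt p μ (m + 1)) : Function.Injective c := by
  intro j j' hjj'
  by_contra hne
  obtain ⟨i, rfl⟩ := Fin.exists_succAbove_eq (Ne.symm hne)
  have := quantCost_lt_succAbove_of_mem_Copt hp hμΩ hμp hsupp hc j
  rw [codeSet_eq_insert_succAbove c j, insert_eq_of_mem
    (show c j ∈ codeSet (c ∘ j.succAbove) from Or.inr ⟨i, hjj'.symm⟩)] at this
  exact this.false

lemma measure_Vcell_pos_of_mem_Copt (hp : 0 < p) (hμΩ : μ Omegaᶜ = 0) (hμp : Pers p μ ≠ ⊤)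
    (hsupp : ∃ s : Finset E2, s.card = m + 1 ∧ ↑s ⊆ msupport μ) {c : Fin (m + 1) → E2}
    (hc : c ∈ Copt p μ (m + 1)) (j : Fin (m + 1)) : 0 < μ (Vcell (m + 1) c j.castSucc) := by
  refine pos_iff_ne_zero.2 fun h0 => ?_
  have hae : ∀ᵐ x ∂μ.restrict Omega, x ∈ Omega ∧ x ∉ Vcell (m + 1) c j.castSucc :=
    (ae_restrict_mem isOpen_Omega.measurableSet).and
      (ae_restrict_of_ae (measure_eq_zero_iff_ae_notMem.1 h0))
  have hle : quantCost p μ (codeSet (c ∘ j.succAbove)) ≤ quantCost p μ (codeSet c) :=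
    lintegral_mono_ae <| hae.mono fun x hx => ENNReal.ofReal_le_ofReal <|
      Real.rpow_le_rpow infDist_nonneg (infDist_codeSet_succAbove_le hx.1 hx.2) hp.le
  exact (quantCost_lt_succAbove_of_mem_Copt hp hμΩ hμp hsupp hc j).not_ge hle

lemma isCompact_Copt (hp : 0 < p) (hμΩ : μ Omegaᶜ = 0) (hμp : Pers p μ ≠ ⊤)
    (hsupp : ∃ s : Finset E2, s.card = m + 1 ∧ ↑s ⊆ msupport μ) :
    IsCompact (Copt p μ (m + 1)) := by
  obtain ⟨c₀, hc₀⟩ := Copt_nonempty hp hμΩ hμp hsupp m m.le_succ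
  obtain ⟨a, hlta, hao⟩ := exists_between
    (optCost_succ_lt_optCost hp hμΩ hμp hsupp m.lt_succ_self hc₀)
  obtain ⟨R, hR⟩ := exists_norm_le_of_quantCost_lt hp.le hμp hao
  have hCopt : Copt p μ (m + 1) = {c | ∀ j, c j ∈ OmegaBar} ∩
      {c | quantCost p μ (codeSet c) = optCost p μ (m + 1)} :=
    ext fun _ => mem_Copt_iff μ hp
  refine (isCompact_univ_pi fun _ => isCompact_closedBall (0 : E2) R).of_isClosed_subset ?_ ?_
  · rw [hCopt]
    exact (isClosed_setOf_forall_mem_OmegaBar _).inter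
      (isClosed_eq (continuous_quantCost_codeSet hp.le hμp _) continuous_const)
  · intro c hc j _
    have hopt := ((mem_Copt_iff μ hp).1 hc).2
    simpa using hR c hc.1 (hopt ▸ hlta) j

end Optimal

/-- Proposition: existence and properties of optimal codebooks.
If `μ ∈ M^p` has at least `k` points in its support, the set `C_k` of optimal codebooks is a
nonempty compact subset of `Ω̄^k`; moreover every optimal codebook has all its centroids in
`Ω`, pairwise distinct, and each of its (non-diagonal) Voronoi cells has positive mass. -/
theorem statement5 (p : ℝ) (hp : 1 ≤ p) (k : ℕ) (hk : 1 ≤ k) (μ : Measure E2)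
    (hμΩ : μ Omegaᶜ = 0) (hμp : Pers p μ < ⊤)
    (hsupp : ∃ s : Finset E2, s.card = k ∧ ↑s ⊆ msupport μ) :
    (Copt p μ k).Nonempty ∧ IsCompact (Copt p μ k) ∧
      ∀ c ∈ Copt p μ k,
        (∀ j, c j ∈ Omega) ∧
        (∀ j : Fin k, 0 < μ (Vcell k c j.castSucc)) ∧
        (∀ j j' : Fin k, j ≠ j' → c j ≠ c j') := by
  have hp0 : 0 < p := by linarith
  obtain ⟨m, rfl⟩ : ∃ m, k = m + 1 := ⟨k - 1, by omega⟩
  refine ⟨Copt_nonempty hp0 hμΩ hμp.ne hsupp _ le_rfl, isCompact_Copt hp0 hμΩ hμp.ne hsupp,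
    fun c hc => ⟨mem_Omega_of_mem_Copt hp0 hμΩ hμp.ne hsupp hc,
      measure_Vcell_pos_of_mem_Copt hp0 hμΩ hμp.ne hsupp hc,
      fun j j' hne => (injective_of_mem_Copt hp0 hμΩ hμp.ne hsupp hc).ne hne⟩⟩

end
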